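/- Let α_j = 2·cos((2j-1)π/(2L)). For v ∈ ℂ with |v| small and κ with |cos κ| small, the solution α_j(v, κ) of Δ_L(E) = 2·cos κ nearest α_j satisfies α_j(v, κ) = α_j + v/L + 2·(-1)^{j-1}·(sin((2j-1)π/(2L))/L)·cos κ + O((|v| + |cos κ|)²). -/

import Mathlib

/-!
At `v = 0`, `cos κ = 0` the equation `Δ_L(E) = 2 cos κ` reduces to `T_L(E/2) = 0`, whose roots
`α_j = 2 cos θ_j`, `θ_j = (2j-1)π/(2L)`, are simple. Near a simple root `z₀` of `p`, the inverse
function theorem solves `p(E) - v q(E) = w` with `E` close to `z₀`, and the Taylor expansions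
`p(E) = p'(z₀)(E - z₀) + O(|E - z₀|²)`, `q(E) = q(z₀) + O(|E - z₀|)` then force
`E = z₀ + (w + v q(z₀))/p'(z₀) + O((|v| + |w|)²)`. For `p = 2 T_L(X/2)`, `q = U_{L-1}(X/2)` one has
`p'(α_j) = L U_{L-1}(cos θ_j)` and `U_{L-1}(cos θ_j) sin θ_j = sin(L θ_j) = (-1)^{j-1}`.
-/

open Polynomial Real

noncomputable def sparseDiscriminant (L : ℕ) (v : ℂ) (E : ℂ) : ℂ :=
  2 * (Polynomial.Chebyshev.T ℂ L).eval (E / 2)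
    - v * (Polynomial.Chebyshev.U ℂ (L - 1)).eval (E / 2)

open Filter Topology

namespace Polynomial

variable {𝕜 : Type*} [NontriviallyNormedField 𝕜] [ProperSpace 𝕜]

theorem exists_norm_eval_add_sub_sub_le (p : 𝕜[X]) (z : 𝕜) :
    ∃ M, 0 ≤ M ∧ ∀ h : 𝕜, ‖h‖ ≤ 1 →
      ‖p.eval (z + h) - p.eval z - p.derivative.eval z * h‖ ≤ M * ‖h‖ ^ 2 := by
  have hR : ∀ h, p.eval (z + h) - p.eval z - p.derivative.eval z * h =
      h ^ 2 * (taylor z p).divX.divX.eval h := by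
    intro h
    have h₁ := congrArg (eval h) (X_mul_divX_add (taylor z p))
    have h₂ := congrArg (eval h) (X_mul_divX_add (divX (taylor z p)))
    simp only [eval_add, eval_mul, eval_X, eval_C, coeff_divX, zero_add, taylor_coeff_zero,
      taylor_coeff_one, taylor_eval, add_comm h z] at h₁ h₂
    linear_combination -h₁ - h * h₂
  obtain ⟨M, hM⟩ := (isCompact_closedBall (0 : 𝕜) 1).exists_bound_of_continuousOn
    (taylor z p).divX.divX.continuous.continuousOn
  refine ⟨max M 0, le_max_right _ _, fun h hh => ?_⟩
  rw [hR, norm_mul, norm_pow, mul_comm]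
  gcongr
  exact (hM h (by simpa using hh)).trans (le_max_left _ _)

theorem exists_norm_eval_add_sub_le (p : 𝕜[X]) (z : 𝕜) :
    ∃ M, 0 ≤ M ∧ ∀ h : 𝕜, ‖h‖ ≤ 1 → ‖p.eval (z + h) - p.eval z‖ ≤ M * ‖h‖ := by
  obtain ⟨M, hM₀, hM⟩ := p.exists_norm_eval_add_sub_sub_le z
  refine ⟨M + ‖p.derivative.eval z‖, by positivity, fun h hh => ?_⟩
  have hsq : ‖h‖ ^ 2 ≤ ‖h‖ := by nlinarith [norm_nonneg h]
  calc ‖p.eval (z + h) - p.eval z‖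
      ≤ ‖p.eval (z + h) - p.eval z - p.derivative.eval z * h‖ + ‖p.derivative.eval z * h‖ := by
        simpa using norm_add_le (p.eval (z + h) - p.eval z - p.derivative.eval z * h)
          (p.derivative.eval z * h)
    _ ≤ M * ‖h‖ + ‖p.derivative.eval z‖ * ‖h‖ := by
        rw [norm_mul]; gcongr; exact (hM h hh).trans (by gcongr)
    _ = _ := by ring

variable {p q : 𝕜[X]} {z₀ : 𝕜}

theorem exists_norm_derivative_mul_sub_le (hp : p.IsRoot z₀) :
    ∃ M, 0 ≤ M ∧ ∀ v E : 𝕜, ‖E - z₀‖ ≤ 1 →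
      ‖p.derivative.eval z₀ * (E - z₀) - (p.eval E - v * q.eval E + v * q.eval z₀)‖ ≤
        M * (‖E - z₀‖ + ‖v‖) * ‖E - z₀‖ := by
  obtain ⟨M₁, hM₁₀, hM₁⟩ := p.exists_norm_eval_add_sub_sub_le z₀
  obtain ⟨M₂, hM₂₀, hM₂⟩ := q.exists_norm_eval_add_sub_le z₀
  refine ⟨M₁ + M₂, by positivity, fun v E hE => ?_⟩
  have hp' := hM₁ (E - z₀) hE
  have hq' := hM₂ (E - z₀) hE
  rw [add_sub_cancel] at hp' hq'
  rw [hp.eq_zero, sub_zero] at hp'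
  calc _ = ‖-(p.eval E - p.derivative.eval z₀ * (E - z₀)) + v * (q.eval E - q.eval z₀)‖ := by
        congr 1; ring
    _ ≤ ‖p.eval E - p.derivative.eval z₀ * (E - z₀)‖ + ‖v‖ * ‖q.eval E - q.eval z₀‖ := by
        grw [norm_add_le, norm_neg, norm_mul]
    _ ≤ M₁ * ‖E - z₀‖ ^ 2 + ‖v‖ * (M₂ * ‖E - z₀‖) := by gcongr
    _ ≤ (M₁ + M₂) * (‖E - z₀‖ + ‖v‖) * ‖E - z₀‖ := by
        nlinarith [mul_nonneg (mul_nonneg hM₁₀ (norm_nonneg v)) (norm_nonneg (E - z₀)),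
          mul_nonneg (mul_nonneg hM₂₀ (norm_nonneg (E - z₀))) (norm_nonneg (E - z₀))]

/-- Inverse function theorem for `(v, E) ↦ (v, p E - v * q E)`, whose derivative at `(0, z₀)` is
`(dv, dE) ↦ (dv, p' z₀ * dE - q z₀ * dv)`, invertible because `p' z₀ ≠ 0`. -/
theorem eventually_exists_eval_sub_mul_eq (hp : p.IsRoot z₀) (ha : p.derivative.eval z₀ ≠ 0)
    {ρ : ℝ} (hρ : 0 < ρ) :
    ∀ᶠ x : 𝕜 × 𝕜 in 𝓝 0, ∃ E, ‖E - z₀‖ < ρ ∧ p.eval E - x.1 * q.eval E = x.2 := by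
  set a := p.derivative.eval z₀
  set b := q.eval z₀
  set Φ : 𝕜 × 𝕜 → 𝕜 × 𝕜 := fun x => (x.1, p.eval x.2 - x.1 * q.eval x.2)
  set Φ' : 𝕜 × 𝕜 →L[𝕜] 𝕜 × 𝕜 := (ContinuousLinearMap.fst 𝕜 𝕜 𝕜).prod
    (a • ContinuousLinearMap.snd 𝕜 𝕜 𝕜 - b • ContinuousLinearMap.fst 𝕜 𝕜 𝕜)
  have hΦ : HasStrictFDerivAt Φ Φ' (0, z₀) := by
    refine hasStrictFDerivAt_fst.prodMk ?_
    have hsnd : HasStrictFDerivAt Prod.snd (ContinuousLinearMap.snd 𝕜 𝕜 𝕜) ((0 : 𝕜), z₀) :=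
      hasStrictFDerivAt_snd
    have hP := (p.hasStrictDerivAt z₀).comp_hasStrictFDerivAt _ hsnd
    have hQ := (q.hasStrictDerivAt z₀).comp_hasStrictFDerivAt _ hsnd
    convert hP.sub (hasStrictFDerivAt_fst.mul hQ) using 1
    · rfl
    · simp [a, b]
  have hsurj : Φ'.range = ⊤ := by
    refine LinearMap.range_eq_top.2 fun y => ⟨(y.1, (y.2 + b * y.1) / a), ?_⟩
    ext <;> simp [Φ', mul_div_cancel₀ _ ha]
  have hΦ0 : Φ (0, z₀) = 0 := by simp [Φ, hp.eq_zero]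
  have hU : {x : 𝕜 × 𝕜 | ‖x.2 - z₀‖ < ρ} ∈ 𝓝 (0, z₀) :=
    (isOpen_lt (by fun_prop) continuous_const).mem_nhds (by simpa using hρ)
  have himage : Φ '' {x | ‖x.2 - z₀‖ < ρ} ∈ 𝓝 0 := by
    rw [← hΦ0, ← hΦ.map_nhds_eq_of_surj hsurj]
    exact image_mem_map hU
  filter_upwards [himage] with x ⟨⟨v, E⟩, hE, hx⟩
  exact ⟨E, hE, by rw [← hx]⟩

theorem exists_norm_sub_sub_div_le (hp : p.IsRoot z₀) (ha : p.derivative.eval z₀ ≠ 0) :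
    ∃ ρ C, 0 < ρ ∧ 0 ≤ C ∧ ∀ v w E : 𝕜, ‖v‖ ≤ ρ → ‖E - z₀‖ ≤ ρ →
      p.eval E - v * q.eval E = w →
      ‖E - z₀ - (w + v * q.eval z₀) / p.derivative.eval z₀‖ ≤ C * (‖v‖ + ‖w‖) ^ 2 := by
  set a := p.derivative.eval z₀
  set b := q.eval z₀
  obtain ⟨M, hM₀, hM⟩ := exists_norm_derivative_mul_sub_le (q := q) hp
  have ha' : 0 < ‖a‖ := norm_pos_iff.2 ha
  obtain ⟨ρ, hρ, hρ₁, hρa⟩ : ∃ ρ, 0 < ρ ∧ ρ ≤ 1 ∧ 4 * M * ρ ≤ ‖a‖ := by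
    refine ⟨min 1 (‖a‖ / (4 * (M + 1))), by positivity, min_le_left _ _, ?_⟩
    calc 4 * M * min 1 (‖a‖ / (4 * (M + 1))) ≤ 4 * (M + 1) * (‖a‖ / (4 * (M + 1))) := by
          gcongr
          · linarith
          · exact min_le_right _ _
      _ = ‖a‖ := by field_simp
  set K := 2 * (1 + ‖b‖) / ‖a‖
  refine ⟨ρ, (M * K + M) * K / ‖a‖, hρ, by positivity, fun v w E hv hE hw => ?_⟩
  set h := E - z₀
  set m := ‖v‖ + ‖w‖
  have hres : ‖a * h - (w + v * b)‖ ≤ M * (‖h‖ + ‖v‖) * ‖h‖ := by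
    simpa [hw, add_assoc] using hM v E (hE.trans hρ₁)
  have hsmall : M * (‖h‖ + ‖v‖) ≤ ‖a‖ / 2 := by
    nlinarith [mul_le_mul_of_nonneg_left (add_le_add hE hv) hM₀]
  have hwvb : ‖w + v * b‖ ≤ (1 + ‖b‖) * m := by
    grw [norm_add_le, norm_mul]; nlinarith [norm_nonneg v, norm_nonneg w, norm_nonneg b]
  have hlin : ‖h‖ ≤ K * m := by
    have : ‖a‖ * ‖h‖ ≤ (1 + ‖b‖) * m + ‖a‖ / 2 * ‖h‖ := by
      calc ‖a‖ * ‖h‖ = ‖(w + v * b) + (a * h - (w + v * b))‖ := by rw [← norm_mul]; ring_nf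
        _ ≤ ‖w + v * b‖ + ‖a * h - (w + v * b)‖ := norm_add_le _ _
        _ ≤ (1 + ‖b‖) * m + ‖a‖ / 2 * ‖h‖ := by
          gcongr; exact hres.trans (by gcongr)
    rw [div_mul_eq_mul_div, le_div_iff₀ ha']
    nlinarith
  -- Feeding the a priori bound `hlin` back into `hres` makes the remainder quadratic in `m`.
  calc ‖h - (w + v * b) / a‖ = ‖a * h - (w + v * b)‖ / ‖a‖ := by
        rw [← norm_div, sub_div, mul_div_cancel_left₀ _ ha]
    _ ≤ M * (K * m + m) * (K * m) / ‖a‖ := by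
        gcongr
        refine hres.trans ?_
        gcongr
        · exact le_add_of_nonneg_right (norm_nonneg w)
    _ = (M * K + M) * K / ‖a‖ * m ^ 2 := by ring

theorem exists_eval_sub_mul_eq_near_root (hp : p.IsRoot z₀) (ha : p.derivative.eval z₀ ≠ 0) :
    ∃ C δ, 0 < C ∧ 0 < δ ∧ ∀ v w : 𝕜, ‖v‖ + ‖w‖ < δ →
      ∃ E, p.eval E - v * q.eval E = w ∧
        ‖E - z₀ - (w + v * q.eval z₀) / p.derivative.eval z₀‖ ≤ C * (‖v‖ + ‖w‖) ^ 2 := by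
  obtain ⟨ρ, C, hρ, hC, hquad⟩ := exists_norm_sub_sub_div_le (q := q) hp ha
  obtain ⟨δ, hδ, hsol⟩ :=
    Metric.eventually_nhds_iff.1 (eventually_exists_eval_sub_mul_eq (q := q) hp ha hρ)
  refine ⟨C + 1, min δ ρ, by positivity, lt_min hδ hρ, fun v w hvw => ?_⟩
  have hv : ‖v‖ ≤ ρ := by linarith [min_le_right δ ρ, norm_nonneg w]
  obtain ⟨E, hE, hEw⟩ := hsol (y := (v, w)) (by
    rw [dist_zero_right, Prod.norm_def, max_lt_iff]
    constructor <;> linarith [min_le_left δ ρ, norm_nonneg v, norm_nonneg w])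
  refine ⟨E, hEw, (hquad v w E hv hE.le hEw).trans ?_⟩
  gcongr
  linarith

end Polynomial

namespace Polynomial.Chebyshev

theorem T_eval_cos_eq_zero {L k : ℕ} {θ : ℂ} (hθ : (L : ℂ) * θ = k * π + π / 2) :
    (T ℂ L).eval (Complex.cos θ) = 0 := by
  rw [T_complex_cos, Int.cast_natCast, hθ, Complex.cos_add_pi_div_two, Complex.sin_nat_mul_pi,
    neg_zero]

theorem U_eval_cos_mul_sin {L k : ℕ} {θ : ℂ} (hθ : (L : ℂ) * θ = k * π + π / 2) :
    (U ℂ (L - 1)).eval (Complex.cos θ) * Complex.sin θ = (-1) ^ k := by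
  rw [U_complex_cos, Int.cast_sub, Int.cast_natCast, Int.cast_one, sub_add_cancel, hθ,
    Complex.sin_add_pi_div_two]
  exact_mod_cast Real.cos_nat_mul_pi k

theorem eval_derivative_two_mul_T_comp_half (L : ℕ) (E : ℂ) :
    (Polynomial.C 2 * (T ℂ L).comp (Polynomial.C 2⁻¹ * X)).derivative.eval E =
      L * (U ℂ (L - 1)).eval (2⁻¹ * E) := by
  simp [derivative_comp, T_derivative_eq_U]

end Polynomial.Chebyshev

theorem sparseDiscriminant_eq_eval_sub_mul_eval (L : ℕ) (v E : ℂ) :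
    sparseDiscriminant L v E = (C 2 * (Chebyshev.T ℂ L).comp (C 2⁻¹ * X)).eval E
      - v * ((Chebyshev.U ℂ (L - 1)).comp (C 2⁻¹ * X)).eval E := by
  simp [sparseDiscriminant, div_eq_inv_mul]

theorem exists_sparseDiscriminant_eq_near_root {L k : ℕ} (hL : L ≠ 0) {θ : ℂ}
    (hθ : (L : ℂ) * θ = k * π + π / 2) :
    ∃ C δ, 0 < C ∧ 0 < δ ∧ ∀ v w : ℂ, ‖v‖ + ‖w‖ < δ →
      ∃ E, sparseDiscriminant L v E = w ∧
        ‖E - 2 * Complex.cos θ - v / L - (-1) ^ k * (Complex.sin θ / L) * w‖ ≤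
          C * (‖v‖ + ‖w‖) ^ 2 := by
  have hL' : (L : ℂ) ≠ 0 := Nat.cast_ne_zero.2 hL
  set b := (Chebyshev.U ℂ (L - 1)).eval (Complex.cos θ)
  have hb : b * Complex.sin θ = (-1) ^ k := Chebyshev.U_eval_cos_mul_sin hθ
  have hb0 : b ≠ 0 := left_ne_zero_of_mul (hb ▸ pow_ne_zero k (by norm_num))
  have hbinv : b⁻¹ = (-1) ^ k * Complex.sin θ := by
    refine (eq_inv_of_mul_eq_one_left ?_).symm
    rw [mul_assoc, mul_comm _ b, hb, ← mul_pow]; norm_num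
  have hderiv : (C 2 * (Chebyshev.T ℂ L).comp (C 2⁻¹ * X)).derivative.eval (2 * Complex.cos θ)
      = L * b := by
    rw [Chebyshev.eval_derivative_two_mul_T_comp_half, inv_mul_cancel_left₀ two_ne_zero]
  obtain ⟨K, δ, hK, hδ, hsol⟩ := exists_eval_sub_mul_eq_near_root
    (q := (Chebyshev.U ℂ (L - 1)).comp (C 2⁻¹ * X))
    (by simp [Chebyshev.T_eval_cos_eq_zero hθ]) (hderiv ▸ mul_ne_zero hL' hb0)
  refine ⟨K, δ, hK, hδ, fun v w hvw => ?_⟩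
  obtain ⟨E, hE, hbound⟩ := hsol v w hvw
  refine ⟨E, by rwa [sparseDiscriminant_eq_eval_sub_mul_eval], le_of_eq_of_le ?_ hbound⟩
  have hq : ((Chebyshev.U ℂ (L - 1)).comp (C 2⁻¹ * X)).eval (2 * Complex.cos θ) = b := by
    simp [b]
  rw [hderiv, hq, add_div, mul_div_mul_right _ _ hb0, div_eq_mul_inv w, mul_inv, hbinv]
  ring_nf

theorem floquet_perturbation_small_v_general (L : ℕ) (hL : 1 ≤ L) (j : ℕ)
    (hj1 : 1 ≤ j) :
    ∃ C δ : ℝ, 0 < C ∧ 0 < δ ∧ ∀ (v : ℂ) (κ : ℝ),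
      ‖v‖ + |Real.cos κ| < δ →
      ∃ E : ℂ, sparseDiscriminant L v E = 2 * Real.cos κ ∧
        ‖E - 2 * Complex.cos ((2 * j - 1) * Real.pi / (2 * L)) - v / L
            - 2 * (-1) ^ (j - 1) * (Real.sin ((2 * j - 1) * Real.pi / (2 * L)) / L : ℝ)
              * Real.cos κ‖
          ≤ C * (‖v‖ + |Real.cos κ|) ^ 2 := by
  obtain ⟨k, rfl⟩ : ∃ k, j = k + 1 := ⟨j - 1, by omega⟩
  set θ : ℂ := (2 * ((k + 1 : ℕ) : ℂ) - 1) * π / (2 * L) with hθdef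
  have hθ : (L : ℂ) * θ = k * π + π / 2 := by
    have hL' : (L : ℂ) ≠ 0 := by exact_mod_cast (by omega : L ≠ 0)
    rw [hθdef]; field_simp; push_cast; ring
  have hθR : (((2 * ((k + 1 : ℕ) : ℝ) - 1) * π / (2 * L) : ℝ) : ℂ) = θ := by push_cast [θ]; rfl
  obtain ⟨K, δ, hK, hδ, hsol⟩ := exists_sparseDiscriminant_eq_near_root (by omega) hθ
  refine ⟨4 * K, δ / 2, by positivity, by positivity, fun v κ hvκ => ?_⟩
  have hw : ‖(2 * Real.cos κ : ℂ)‖ = 2 * |Real.cos κ| := by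
    rw [norm_mul, Complex.norm_real, Real.norm_eq_abs, Complex.norm_two]
  obtain ⟨E, hE, hbound⟩ := hsol v (2 * Real.cos κ) (by rw [hw]; linarith [norm_nonneg v])
  refine ⟨E, hE, ?_⟩
  rw [Nat.add_sub_cancel, Complex.ofReal_div, Complex.ofReal_sin, hθR, Complex.ofReal_natCast]
  calc _ = ‖E - 2 * Complex.cos θ - v / L - (-1) ^ k * (Complex.sin θ / L) * (2 * Real.cos κ)‖ := by
        ring_nf
    _ ≤ K * (‖v‖ + 2 * |Real.cos κ|) ^ 2 := hw ▸ hbound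
    _ ≤ K * (2 * (‖v‖ + |Real.cos κ|)) ^ 2 := by gcongr; linarith [norm_nonneg v]
    _ = 4 * K * (‖v‖ + |Real.cos κ|) ^ 2 := by ring

theorem floquet_perturbation_small_v (L : ℕ) (hL : 1 ≤ L) (j : ℕ)
    (hj1 : 1 ≤ j) (hjL : j ≤ L) :
    ∃ C δ : ℝ, 0 < C ∧ 0 < δ ∧ ∀ (v : ℂ) (κ : ℝ),
      ‖v‖ + |Real.cos κ| < δ →
      ∃ E : ℂ, sparseDiscriminant L v E = 2 * Real.cos κ ∧
        ‖E - 2 * Complex.cos ((2 * j - 1) * Real.pi / (2 * L)) - v / L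
            - 2 * (-1) ^ (j - 1) * (Real.sin ((2 * j - 1) * Real.pi / (2 * L)) / L : ℝ)
              * Real.cos κ‖
          ≤ C * (‖v‖ + |Real.cos κ|) ^ 2 :=
  floquet_perturbation_small_v_general L hL j hj1
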